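/- Let σ : I^{n+1} → G be a singular (n+1)-cube in which two adjacent faces f_i^a σ and f_j^{-a} σ (i < j, opposite signs) are both supported by the same rigid n-cube, with f_i^a f_j^a σ = f_i^{-a} f_j^{-a} σ, so that σ ∘ T_i = σ ∘ T_i ∘ T_{i,j}. Then f_i^a σ = (f_j^{-a} σ) ∘ T_i ∘ T_{i,i+1} ∘ T_{i+1,i+2} ∘ ⋯ ∘ T_{j-2,j-1}. -/

import Mathlib

/-- The discrete `n`-cube graph on `{0,1}^n`: two vertices are adjacent iff they
differ in exactly one coordinate. -/
def Cube (n : ℕ) : SimpleGraph (Fin n → Bool) where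
  Adj x y := ∃! i, x i ≠ y i
  symm := by
    constructor
    rintro x y ⟨i, hi, hu⟩
    exact ⟨i, hi.symm, fun j hj => hu j hj.symm⟩
  loopless := by
    constructor
    rintro x ⟨i, hi, -⟩
    exact hi rfl

/-- A graph map sends each edge to an edge or to a vertex. -/
def IsGraphMap {V W : Type*} (G : SimpleGraph V) (H : SimpleGraph W) (f : V → W) : Prop :=
  ∀ ⦃u v⦄, G.Adj u v → H.Adj (f u) (f v) ∨ f u = f v

/-- The face of a singular cube obtained by fixing the `i`-th coordinate to `b`
(`b = false` gives the front face `f_i^-`, `b = true` the back face `f_i^+`). -/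
def face {V : Type*} {n : ℕ} (i : Fin (n + 1)) (b : Bool)
    (σ : (Fin (n + 1) → Bool) → V) : (Fin n → Bool) → V :=
  fun t => σ (i.insertNth b t)

/-- The reflection `T_i` of the discrete cube, flipping the `i`-th coordinate. -/
def reflT {n : ℕ} (i : Fin n) (t : Fin n → Bool) : Fin n → Bool :=
  Function.update t i (!t i)

/-- The transposition `T_{i,j}` of the discrete cube, swapping coordinates `i` and `j`. -/
def swapT {n : ℕ} (i j : Fin n) (t : Fin n → Bool) : Fin n → Bool :=
  t ∘ Equiv.swap i j

/-- A singular cube is degenerate iff it does not depend on some coordinate,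
equivalently some pair of opposite faces `f_i^- σ = f_i^+ σ` agree. -/
def IsDegenerate {V : Type*} {m : ℕ} (τ : (Fin m → Bool) → V) : Prop :=
  ∃ i : Fin m, ∀ t, τ t = τ (reflT i t)

/-- The composite of adjacent transpositions `T_{i,i+1} ∘ T_{i+1,i+2} ∘ ⋯ ∘ T_{j-2,j-1}`
(0-based indices) on the discrete `n`-cube. -/
def adjSwapChain (n : ℕ) (i j : ℕ) : (Fin n → Bool) → (Fin n → Bool) :=
  ((List.range (j - i - 1)).map fun k =>
    if h : i + k + 1 < n then
      swapT (⟨i + k, by omega⟩ : Fin n) ⟨i + k + 1, h⟩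
    else id).foldr (· ∘ ·) id

/-!
Conjugating by `T_i`, the hypothesis says that `σ` is invariant under `T_i T_{i,j} T_i`, which
exchanges the coordinates `i` and `j` and negates both. On a point of the face `f_i^a` this moves
the fixed value `a` to coordinate `j`, negated, so the point lands on the face `f_j^{-a}`; its free
coordinates are the old ones with coordinate `j - 1` moved to position `i` and negated, which is
`T_i ∘ T_{i,i+1} ∘ ⋯ ∘ T_{j-2,j-1}` in the coordinates of that face.
-/

lemma Fin.insertNth_apply_eq_dite {α : Type*} {N : ℕ} (p : Fin (N + 1)) (b : α) (t : Fin N → α)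
    (m : Fin (N + 1)) :
    Fin.insertNth (α := fun _ => α) p b t m =
      if _ : (m : ℕ) = p then b
      else if h : (m : ℕ) < p then t ⟨m, by have := p.isLt; omega⟩
      else t ⟨m - 1, by have := m.isLt; omega⟩ := by
  rcases lt_trichotomy m p with h | rfl | h
  · rw [Fin.insertNth_apply_below h]
    simp only [eq_rec_constant, Fin.val_ne_of_ne h.ne, ↓reduceDIte, Fin.val_fin_lt, h]
    rfl
  · simp
  · rw [Fin.insertNth_apply_above h]
    simp only [eq_rec_constant, Fin.val_ne_of_ne h.ne', ↓reduceDIte, Fin.val_fin_lt,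
      not_lt.2 h.le]
    rfl

lemma reflT_involutive {n : ℕ} (i : Fin n) : Function.Involutive (reflT i) := by
  intro t
  simp [reflT]

lemma List.foldr_comp_eq_comp {α : Type*} (l : List (α → α)) (g : α → α) :
    l.foldr (· ∘ ·) g = l.foldr (· ∘ ·) id ∘ g := by
  induction l with
  | nil => rfl
  | cons f l ih => simp only [List.foldr_cons, ih]; rfl

lemma adjSwapChain_succ {N i j : ℕ} (hij : i < j) (hjN : j < N) :
    adjSwapChain N i (j + 1) = adjSwapChain N i j ∘ swapT ⟨j - 1, by omega⟩ ⟨j, hjN⟩ := by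
  rw [adjSwapChain, show j + 1 - i - 1 = j - i - 1 + 1 by omega, List.range_succ, List.map_append,
    List.foldr_append, List.map_singleton, List.foldr_cons, List.foldr_nil,
    List.foldr_comp_eq_comp, dif_pos (by omega), Function.comp_id]
  congr 2 <;> rw [Fin.mk.injEq] <;> omega

lemma adjSwapChain_apply {N i j : ℕ} (hij : i < j) (hjN : j ≤ N) (t : Fin N → Bool) (k : Fin N) :
    adjSwapChain N i j t k =
      if (k : ℕ) < i ∨ j ≤ k then t k
      else if (k : ℕ) = i then t ⟨j - 1, by omega⟩
      else t ⟨k - 1, by omega⟩ := by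
  induction j, hij using Nat.le_induction generalizing t with
  | base =>
    rw [adjSwapChain, show i + 1 - i - 1 = 0 by omega]
    simp only [List.range_zero, List.map_nil, List.foldr_nil, id]
    split_ifs <;> first | rfl | (congr 1; ext; simp only; omega)
  | succ j hij ih =>
    rw [adjSwapChain_succ hij (by omega), Function.comp_apply, ih (by omega)]
    simp only [swapT, Function.comp_apply, Equiv.swap_apply_def, Fin.ext_iff]
    split_ifs <;> first | rfl | (congr 1; ext; simp only; omega)

lemma reflT_swapT_reflT_apply {n : ℕ} {i j : Fin n} (hij : i ≠ j) (u : Fin n → Bool)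
    (m : Fin n) :
    reflT i (swapT i j (reflT i u)) m =
      if m = i then !u j else if m = j then !u i else u m := by
  simp only [reflT, swapT, Function.update_apply, Function.comp_apply, Equiv.swap_apply_def]
  split_ifs <;> simp_all

lemma reflT_swapT_reflT_insertNth {N : ℕ} {i j : Fin (N + 1)} (hij : i < j) (a : Bool)
    (t : Fin N → Bool) :
    reflT i (swapT i j (reflT i (Fin.insertNth i a t))) =
      Fin.insertNth j (!a) (reflT (⟨i, by omega⟩ : Fin N) (adjSwapChain N i j t)) := by
  have hij' : (i : ℕ) < j := hij
  funext m
  rw [reflT_swapT_reflT_apply hij.ne]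
  simp only [reflT, Function.update_apply, Fin.insertNth_apply_eq_dite,
    adjSwapChain_apply hij' (by omega) t, Fin.ext_iff]
  repeat' split
  all_goals first | rfl | contradiction | omega

/-- if the adjacent faces `f_i^a σ` and `f_j^{-a} σ` (`i < j`, opposite
signs) are injective with the same rigid image, `f_i^a f_j^a σ = f_i^{-a} f_j^{-a} σ`,
and `σ ∘ T_i = σ ∘ T_i ∘ T_{i,j}`, then
`f_i^a σ = (f_j^{-a} σ) ∘ T_i ∘ T_{i,i+1} ∘ T_{i+1,i+2} ∘ ⋯ ∘ T_{j-2,j-1}`. -/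
theorem adjacent_faces_opposite_sign_relation {V : Type*} {n : ℕ}
    (σ : (Fin (n + 2) → Bool) → V)
    (i j : Fin (n + 2)) (hij : i < j) (a : Bool)
    (hswap : (fun t => σ (reflT i t)) = fun t => σ (reflT i (swapT i j t))) :
    face i a σ = (face j (!a) σ) ∘
      (reflT (⟨i, by omega⟩ : Fin (n + 1))) ∘
      adjSwapChain (n + 1) i j := by
  funext t
  have h := congrFun hswap (reflT i (i.insertNth a t))
  rwa [reflT_involutive i _, reflT_swapT_reflT_insertNth hij] at h
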